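/- Let V be a ℚ-vector space with a symmetric ℚ-bilinear form x·y. On triples (r,f,t) ∈ ℚ × V × ℚ define the product (r,f,t)*(r',f',t') = (rr', rf' + r'f, rt' + r't + f·f'), for x ∈ V set ch(x) = (1, x, (x·x)/2), and set χ(r,f,t) = 2r + t. Let h, ℓ ∈ V satisfy h·h = 2, ℓ·ℓ = −12, h·ℓ = 0. Then for any f ∈ V and r, t ∈ ℚ, writing F = (r,f,t), the triple χ(F*ch(−h))·ch(3ℓ+7h) + χ(F*ch(ℓ+h))·ch(2ℓ+5h) − F*ch(ℓ+h)*ch(2ℓ+5h) equals (−r + f·ℓ + 2t, −f + (f·(ℓ+2h))(2ℓ+5h) − (f·h − t)(5ℓ+12h), −2 f·ℓ − 5t). -/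

import Mathlib

/-- Cup product of Chern-character triples `(ch₀, ch₁, ∫ch₂)` on a K3 surface. -/
def mukaiMul {V : Type*} [AddCommGroup V] [Module ℚ V]
    (B : V →ₗ[ℚ] V →ₗ[ℚ] ℚ) (x y : ℚ × V × ℚ) : ℚ × V × ℚ :=
  (x.1 * y.1, x.1 • y.2.1 + y.1 • x.2.1, x.1 * y.2.2 + y.1 * x.2.2 + B x.2.1 y.2.1)

/-- Chern character of a line bundle with first Chern class `x`. -/
def chLine {V : Type*} [AddCommGroup V] [Module ℚ V]
    (B : V →ₗ[ℚ] V →ₗ[ℚ] ℚ) (x : V) : ℚ × V × ℚ :=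
  (1, x, B x x / 2)

/-- Euler characteristic via Riemann–Roch on a K3 surface. -/
def chiK3 {V : Type*} [AddCommGroup V] [Module ℚ V] (x : ℚ × V × ℚ) : ℚ :=
  2 * x.1 + x.2.2

/-! Multiplying by the character of a line bundle of class `x` is explicit:
`(r, f, t) * ch x = (r, r x + f, r x²/2 + t + f·x)`. On the span of `ℓ` and `h` the form is
diagonal with entries `-12, 2`, so the classes involved have `(-h)² = (2ℓ+5h)² = 2`,
`(ℓ+h)² = (3ℓ+7h)² = -10` and `(ℓ+h)·(2ℓ+5h) = -14`; after substituting these numbers the three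
components agree by linear algebra in `f`, `r`, `t`. -/

section MukaiProduct

variable {V : Type*} [AddCommGroup V] [Module ℚ V] (B : V →ₗ[ℚ] V →ₗ[ℚ] ℚ)

theorem mukaiMul_chLine (r t : ℚ) (f x : V) :
    mukaiMul B (r, f, t) (chLine B x) = (r, r • x + f, r * (B x x / 2) + t + B f x) := by
  simp only [mukaiMul, chLine, one_smul, mul_one, one_mul]

theorem chiK3_mukaiMul_chLine (r t : ℚ) (f x : V) :
    chiK3 (mukaiMul B (r, f, t) (chLine B x)) = 2 * r + r * (B x x / 2) + t + B f x := by
  simp only [mukaiMul_chLine, chiK3]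
  ring

theorem apply_smul_add_smul_of_orthogonal {h ℓ : V} (hhl : B h ℓ = 0) (hlh : B ℓ h = 0)
    (a b c d : ℚ) :
    B (a • ℓ + b • h) (c • ℓ + d • h) = a * c * B ℓ ℓ + b * d * B h h := by
  simp only [map_add, map_smul, LinearMap.add_apply, LinearMap.smul_apply, smul_eq_mul, hhl, hlh]
  ring

end MukaiProduct

/-- The Chern character formula of Theorem 4.2 for a non-degenerate reflexive K3 surface
(`h·h = 2`, `ℓ·ℓ = −12`, `h·ℓ = 0`). -/
theorem stmt_6 {V : Type*} [AddCommGroup V] [Module ℚ V]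
    (B : V →ₗ[ℚ] V →ₗ[ℚ] ℚ) (hsym : ∀ x y : V, B x y = B y x)
    (h ℓ : V) (hhh : B h h = 2) (hll : B ℓ ℓ = -12) (hhl : B h ℓ = 0)
    (f : V) (r t : ℚ) :
    (chiK3 (mukaiMul B (r, f, t) (chLine B (-h)))) • chLine B ((3 : ℚ) • ℓ + (7 : ℚ) • h) +
      (chiK3 (mukaiMul B (r, f, t) (chLine B (ℓ + h)))) •
        chLine B ((2 : ℚ) • ℓ + (5 : ℚ) • h) -
      mukaiMul B (mukaiMul B (r, f, t) (chLine B (ℓ + h)))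
        (chLine B ((2 : ℚ) • ℓ + (5 : ℚ) • h)) =
    (-r + B f ℓ + 2 * t,
      -f + (B f (ℓ + (2 : ℚ) • h)) • ((2 : ℚ) • ℓ + (5 : ℚ) • h) -
        (B f h - t) • ((5 : ℚ) • ℓ + (12 : ℚ) • h),
      -2 * B f ℓ - 5 * t) := by
  have pair (a b c d : ℚ) : B (a • ℓ + b • h) (c • ℓ + d • h) = -12 * (a * c) + 2 * (b * d) := by
    rw [apply_smul_add_smul_of_orthogonal B hhl (by rw [hsym, hhl]), hll, hhh]; ring
  have hl_h : ℓ + h = (1 : ℚ) • ℓ + (1 : ℚ) • h := by module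
  have hneg_h : -h = (0 : ℚ) • ℓ + (-1 : ℚ) • h := by module
  have sq_neg_h : B (-h) (-h) = 2 := by rw [hneg_h, pair]; norm_num
  have sq_l_h : B (ℓ + h) (ℓ + h) = -10 := by rw [hl_h, pair]; norm_num
  have sq_2l_5h : B ((2 : ℚ) • ℓ + (5 : ℚ) • h) ((2 : ℚ) • ℓ + (5 : ℚ) • h) = 2 := by
    rw [pair]; norm_num
  have sq_3l_7h : B ((3 : ℚ) • ℓ + (7 : ℚ) • h) ((3 : ℚ) • ℓ + (7 : ℚ) • h) = -10 := by
    rw [pair]; norm_num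
  have l_h_2l_5h : B (ℓ + h) ((2 : ℚ) • ℓ + (5 : ℚ) • h) = -14 := by rw [hl_h, pair]; norm_num
  rw [chiK3_mukaiMul_chLine, chiK3_mukaiMul_chLine, mukaiMul_chLine, mukaiMul_chLine]
  simp only [chLine]
  rw [sq_neg_h, sq_l_h, sq_2l_5h, sq_3l_7h, LinearMap.map_add₂, LinearMap.map_smul₂, l_h_2l_5h]
  simp only [map_add, map_smul, map_neg, smul_eq_mul, Prod.smul_mk, Prod.mk_add_mk,
    Prod.mk_sub_mk, Prod.mk.injEq]
  refine ⟨by ring, by module, by ring⟩
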